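/- arXiv:1002.5041 — 3 statements merged into one kernel-verified Lean document; each statement's English description precedes it below -/
import Mathlib

section
/- Let n(z) = (2π)^{-1/2} e^{-z²/2} be the standard normal density. For every finite signed measure ω on ℝ that is antisymmetric (i.e., the pushforward of ω by z ↦ −z equals −ω) and has total variation norm ‖ω‖_TV = 1, one has ∫ z n(z) ω(dz) ≤ n(1) = e^{-1/2}/√(2π). Equality holds for the risk-reversal measure ω = ½(δ₁ − δ_{−1}). -/
open MeasureTheory Set

/-- Integral of a function with respect to a finite signed measure, defined via
the Jordan decomposition. -/
noncomputable def signedIntegral (f : ℝ → ℝ) (ω : SignedMeasure ℝ) : ℝ :=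
  (∫ x, f x ∂ω.toJordanDecomposition.posPart)
    - (∫ x, f x ∂ω.toJordanDecomposition.negPart)

/-- The standard normal density. -/
noncomputable def stdNormalDensity (z : ℝ) : ℝ :=
  (Real.sqrt (2 * Real.pi))⁻¹ * Real.exp (-z ^ 2 / 2)

/-! The function `z ↦ z n(z)` attains its maximal modulus `n(1)` at `z = ±1`, since
`|z| ≤ (z² + 1) / 2 ≤ exp ((z² - 1) / 2)` (AM-GM and `1 + t ≤ exp t`); integrating against
the two parts of the Jordan decomposition of `ω`, whose masses add up to `‖ω‖_TV = 1`, gives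
the bound. For the risk reversal the Jordan decomposition is `(½ δ₁, ½ δ₋₁)`, as the two halves
are mutually singular, and since `z n(z)` is odd the integral is `½ n(1) + ½ n(1) = n(1)`. -/

open scoped NNReal

namespace MeasureTheory

variable {α : Type*} [MeasurableSpace α] {μ ν : Measure α} [IsFiniteMeasure μ]
  [IsFiniteMeasure ν]

theorem SignedMeasure.toJordanDecomposition_sub_of_mutuallySingular (h : μ ⟂ₘ ν) :
    (μ.toSignedMeasure - ν.toSignedMeasure).toJordanDecomposition.posPart = μ ∧
      (μ.toSignedMeasure - ν.toSignedMeasure).toJordanDecomposition.negPart = ν := by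
  rw [toJordanDecomposition_eq (s := μ.toSignedMeasure - ν.toSignedMeasure) (j := ⟨μ, ν, h⟩)
    rfl]
  exact ⟨rfl, rfl⟩

theorem SignedMeasure.totalVariation_sub_of_mutuallySingular (h : μ ⟂ₘ ν) :
    (μ.toSignedMeasure - ν.toSignedMeasure).totalVariation = μ + ν := by
  obtain ⟨hpos, hneg⟩ := toJordanDecomposition_sub_of_mutuallySingular h
  rw [totalVariation, hpos, hneg]

theorem Measure.map_sub_toSignedMeasure {β : Type*} [MeasurableSpace β] {f : α → β}
    (hf : Measurable f) :
    (μ.toSignedMeasure - ν.toSignedMeasure).map f =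
      (μ.map f).toSignedMeasure - (ν.map f).toSignedMeasure := by
  ext s hs
  simp [VectorMeasure.map_apply _ hf hs, hs, hf hs, map_measureReal_apply hf hs]

theorem Measure.smul_sub_toSignedMeasure (r : ℝ≥0) :
    (r : ℝ) • (μ.toSignedMeasure - ν.toSignedMeasure) =
      (r • μ).toSignedMeasure - (r • ν).toSignedMeasure := by
  rw [toSignedMeasure_smul, toSignedMeasure_smul, smul_sub, NNReal.smul_def, NNReal.smul_def]

theorem Measure.dirac_mutuallySingular_dirac [MeasurableSingletonClass α] {x y : α}
    (hxy : x ≠ y) : dirac x ⟂ₘ dirac y :=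
  ⟨{x}ᶜ, (MeasurableSet.singleton x).compl, by simp, by simp [hxy.symm]⟩

end MeasureTheory

open MeasureTheory

theorem signedIntegral_sub_of_mutuallySingular {μ ν : Measure ℝ} [IsFiniteMeasure μ]
    [IsFiniteMeasure ν] (h : μ ⟂ₘ ν) (f : ℝ → ℝ) :
    signedIntegral f (μ.toSignedMeasure - ν.toSignedMeasure) = ∫ x, f x ∂μ - ∫ x, f x ∂ν := by
  obtain ⟨hpos, hneg⟩ := SignedMeasure.toJordanDecomposition_sub_of_mutuallySingular h
  rw [signedIntegral, hpos, hneg]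

theorem signedIntegral_le_of_abs_le {f : ℝ → ℝ} {C : ℝ} (hf : ∀ x, |f x| ≤ C)
    (ω : SignedMeasure ℝ) :
    signedIntegral f ω ≤ C * ω.totalVariation.real univ := by
  set μ := ω.toJordanDecomposition.posPart
  set ν := ω.toJordanDecomposition.negPart
  have hμ : |∫ x, f x ∂μ| ≤ C * μ.real univ := by
    simpa only [Real.norm_eq_abs] using
      norm_integral_le_of_norm_le_const (f := f) (μ := μ) (.of_forall hf)
  have hν : |∫ x, f x ∂ν| ≤ C * ν.real univ := by
    simpa only [Real.norm_eq_abs] using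
      norm_integral_le_of_norm_le_const (f := f) (μ := ν) (.of_forall hf)
  calc signedIntegral f ω ≤ |∫ x, f x ∂μ| + |∫ x, f x ∂ν| := by
        rw [signedIntegral]; linarith [le_abs_self (∫ x, f x ∂μ), neg_abs_le (∫ x, f x ∂ν)]
    _ ≤ C * μ.real univ + C * ν.real univ := add_le_add hμ hν
    _ = C * ω.totalVariation.real univ := by
        rw [SignedMeasure.totalVariation, measureReal_add_apply, mul_add]

theorem stdNormalDensity_one :
    stdNormalDensity 1 = Real.exp (-(1:ℝ)/2) / Real.sqrt (2 * Real.pi) := by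
  rw [stdNormalDensity, one_pow]
  ring

theorem abs_mul_stdNormalDensity_le (z : ℝ) : |z * stdNormalDensity z| ≤ stdNormalDensity 1 := by
  have hz : |z| ≤ Real.exp ((z ^ 2 - 1) / 2) := by
    nlinarith [Real.add_one_le_exp ((z ^ 2 - 1) / 2), sq_nonneg (|z| - 1), sq_abs z]
  have key : |z| * Real.exp (-z ^ 2 / 2) ≤ Real.exp (-1 ^ 2 / 2) :=
    calc |z| * Real.exp (-z ^ 2 / 2) ≤ Real.exp ((z ^ 2 - 1) / 2) * Real.exp (-z ^ 2 / 2) := by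
          gcongr
      _ = Real.exp (-1 ^ 2 / 2) := by rw [← Real.exp_add]; ring_nf
  rw [stdNormalDensity, stdNormalDensity, mul_left_comm, abs_mul, abs_mul,
    abs_of_pos (Real.exp_pos _), abs_of_pos (by positivity)]
  gcongr

theorem stdNormalDensity_neg (z : ℝ) : stdNormalDensity (-z) = stdNormalDensity z := by
  rw [stdNormalDensity, stdNormalDensity, neg_sq]

/-- Among antisymmetric unit total-variation signed measures,
`∫ z n(z) ω(dz) ≤ n(1) = e^{-1/2}/√(2π)`, with equality for the risk reversal
`ω = ½(δ₁ − δ₋₁)`. -/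
theorem risk_reversal_optimal_among_antisymmetric :
    (∀ ω : SignedMeasure ℝ,
      ω.map (fun z : ℝ => -z) = -ω →
      ω.totalVariation univ = 1 →
      signedIntegral (fun z => z * stdNormalDensity z) ω ≤
        Real.exp (-(1:ℝ)/2) / Real.sqrt (2 * Real.pi)) ∧
    (∀ ωRR : SignedMeasure ℝ,
      ωRR = (1/2 : ℝ) • ((Measure.dirac (1:ℝ)).toSignedMeasure
              - (Measure.dirac (-1:ℝ)).toSignedMeasure) →
      ωRR.map (fun z : ℝ => -z) = -ωRR ∧
      ωRR.totalVariation univ = 1 ∧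
      signedIntegral (fun z => z * stdNormalDensity z) ωRR =
        Real.exp (-(1:ℝ)/2) / Real.sqrt (2 * Real.pi)) := by
  refine ⟨fun ω _ hTV => ?_, fun ωRR hωRR => ?_⟩
  · calc signedIntegral (fun z => z * stdNormalDensity z) ω
        ≤ stdNormalDensity 1 * ω.totalVariation.real univ :=
          signedIntegral_le_of_abs_le abs_mul_stdNormalDensity_le ω
      _ = _ := by rw [measureReal_def, hTV, ENNReal.toReal_one, mul_one, stdNormalDensity_one]
  set μ : Measure ℝ := (2⁻¹ : ℝ≥0) • Measure.dirac 1
  set ν : Measure ℝ := (2⁻¹ : ℝ≥0) • Measure.dirac (-1)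
  have hδ : Measure.dirac (1 : ℝ) ⟂ₘ Measure.dirac (-1) :=
    Measure.dirac_mutuallySingular_dirac (by norm_num)
  have hμν : μ ⟂ₘ ν := ((hδ.smul_nnreal _).symm.smul_nnreal _).symm
  have hω : ωRR = μ.toSignedMeasure - ν.toSignedMeasure := by
    rw [hωRR, ← Measure.smul_sub_toSignedMeasure]; norm_num
  have hμ : μ.map (fun z => -z) = ν := by
    rw [Measure.map_smul, Measure.map_dirac' measurable_neg]
  have hν : ν.map (fun z => -z) = μ := by
    rw [Measure.map_smul, Measure.map_dirac' measurable_neg, neg_neg]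
  refine ⟨?_, ?_, ?_⟩
  · simp only [hω, Measure.map_sub_toSignedMeasure measurable_neg, hμ, hν, neg_sub]
  · rw [hω, SignedMeasure.totalVariation_sub_of_mutuallySingular hμν]
    simp [μ, ν, ENNReal.inv_two_add_inv_two]
  · rw [hω, signedIntegral_sub_of_mutuallySingular hμν, integral_smul_nnreal_measure,
      integral_smul_nnreal_measure, integral_dirac, integral_dirac, stdNormalDensity_neg,
      ← stdNormalDensity_one, NNReal.smul_def, NNReal.smul_def]
    push_cast
    ring
end

section
/- Let n(z) = (2π)^{-1/2} e^{-z²/2} be the standard normal density and let z₀ be the unique positive solution of (z₀²/2)e^{z₀²/2} = e^{z₀²/2} + 1. For every finite signed measure ω on ℝ with total variation norm ‖ω‖_TV ≤ 1 and ∫ n(z) ω(dz) = 0, one has ∫ z² n(z) ω(dz) ≤ (2/√(2π)) e^{-z₀²/2}. -/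
/-!
Vega-neutrality lets one subtract any multiple of `n` from the integrand; with
`c = z₀² - 2` the left-hand side becomes `∫ (z² - c) n(z) ω(dz)`, which is at most
`sup |(z² - c) n|` because `‖ω‖_TV ≤ 1`. For `t = z² ≥ 0` the function `(t - c) e^{-t/2}`
lies between its value `-c` at `t = 0` and its maximum `2 e^{-(c+2)/2}` at `t = c + 2`,
and the equation defining `z₀` says exactly that `2 e^{-z₀²/2} = c`.
-/

open MeasureTheory Set

open Real

section SignedIntegral

variable {f g : ℝ → ℝ} {C D : ℝ} (ω : SignedMeasure ℝ)

lemma integrable_of_measurable_of_abs_le {μ : Measure ℝ} [IsFiniteMeasure μ]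
    (hf : Measurable f) (hfC : ∀ x, |f x| ≤ C) : Integrable f μ :=
  .of_bound hf.aestronglyMeasurable C (.of_forall hfC)

lemma signedIntegral_add_const_mul (hf : Measurable f) (hfC : ∀ x, |f x| ≤ C)
    (hg : Measurable g) (hgD : ∀ x, |g x| ≤ D) (c : ℝ) :
    signedIntegral (fun x => f x + c * g x) ω = signedIntegral f ω + c * signedIntegral g ω := by
  simp only [signedIntegral]
  rw [integral_add (integrable_of_measurable_of_abs_le hf hfC)
      ((integrable_of_measurable_of_abs_le hg hgD).const_mul c),
    integral_add (integrable_of_measurable_of_abs_le hf hfC)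
      ((integrable_of_measurable_of_abs_le hg hgD).const_mul c),
    integral_const_mul, integral_const_mul]
  ring

lemma signedIntegral_le_mul_totalVariation (hfC : ∀ x, |f x| ≤ C) :
    signedIntegral f ω ≤ C * (ω.totalVariation univ).toReal := by
  set P := ω.toJordanDecomposition.posPart
  set N := ω.toJordanDecomposition.negPart
  have hP : |∫ x, f x ∂P| ≤ C * P.real univ :=
    norm_integral_le_of_norm_le_const (μ := P) (f := f) (.of_forall hfC)
  have hN : |∫ x, f x ∂N| ≤ C * N.real univ :=
    norm_integral_le_of_norm_le_const (μ := N) (f := f) (.of_forall hfC)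
  have hTV : (ω.totalVariation univ).toReal = P.real univ + N.real univ :=
    measureReal_add_apply
  change (∫ x, f x ∂P) - ∫ x, f x ∂N ≤ _
  rw [hTV]
  linarith [le_abs_self (∫ x, f x ∂P), neg_abs_le (∫ x, f x ∂N)]

end SignedIntegral

section GaussianBounds

variable {t c : ℝ}

lemma sub_mul_exp_neg_half_le (t c : ℝ) : (t - c) * exp (-t / 2) ≤ 2 * exp (-(c + 2) / 2) := by
  have hlin : (t - c) / 2 ≤ exp ((t - c - 2) / 2) := by
    linarith [add_one_le_exp ((t - c - 2) / 2)]
  have hsplit : exp (-(c + 2) / 2) = exp ((t - c - 2) / 2) * exp (-t / 2) := by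
    rw [← exp_add]; ring_nf
  rw [hsplit]
  nlinarith [exp_pos (-t / 2)]

lemma neg_le_sub_mul_exp_neg_half (ht : 0 ≤ t) (hc : 0 ≤ c) : -c ≤ (t - c) * exp (-t / 2) := by
  have hexp_le : exp (-t / 2) ≤ 1 := exp_le_one_iff.2 (by linarith)
  nlinarith [exp_pos (-t / 2)]

lemma abs_sub_mul_exp_neg_half_le (ht : 0 ≤ t) (hc : 0 ≤ c) :
    |(t - c) * exp (-t / 2)| ≤ max c (2 * exp (-(c + 2) / 2)) :=
  abs_le.2 ⟨(neg_le_neg (le_max_left _ _)).trans (neg_le_sub_mul_exp_neg_half ht hc),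
    (sub_mul_exp_neg_half_le t c).trans (le_max_right _ _)⟩

@[fun_prop]
lemma measurable_stdNormalDensity : Measurable stdNormalDensity := by
  unfold stdNormalDensity
  fun_prop

lemma abs_stdNormalDensity_le (z : ℝ) : |stdNormalDensity z| ≤ (√(2 * π))⁻¹ := by
  unfold stdNormalDensity
  rw [abs_of_pos (by positivity)]
  exact mul_le_of_le_one_right (by positivity) (exp_le_one_iff.2 (by nlinarith [sq_nonneg z]))

lemma abs_sq_sub_mul_stdNormalDensity_le (hc : 0 ≤ c) (z : ℝ) :
    |(z ^ 2 - c) * stdNormalDensity z| ≤ max c (2 * exp (-(c + 2) / 2)) / √(2 * π) := by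
  have hrewrite : (z ^ 2 - c) * stdNormalDensity z = (z ^ 2 - c) * exp (-z ^ 2 / 2) / √(2 * π) := by
    unfold stdNormalDensity
    ring
  rw [hrewrite, abs_div, abs_of_pos (a := √(2 * π)) (by positivity)]
  exact div_le_div_of_nonneg_right (abs_sub_mul_exp_neg_half_le (sq_nonneg z) hc) (by positivity)

end GaussianBounds

lemma sub_two_eq_two_mul_exp_neg_half {a : ℝ} (h : a / 2 * exp (a / 2) = exp (a / 2) + 1) :
    a - 2 = 2 * exp (-a / 2) := by
  have hinv : exp (a / 2) * exp (-a / 2) = 1 := by rw [← exp_add]; ring_nf; exact exp_zero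
  linear_combination 2 * exp (-a / 2) * h + (2 - a) * hinv

theorem convexity_term_bound_general
    (z₀ : ℝ)
    (hz₀_eq : (z₀ ^ 2 / 2) * Real.exp (z₀ ^ 2 / 2) = Real.exp (z₀ ^ 2 / 2) + 1)
    (ω : SignedMeasure ℝ)
    (hTV : ω.totalVariation univ ≤ 1)
    (hneutral : signedIntegral stdNormalDensity ω = 0) :
    signedIntegral (fun z => z ^ 2 * stdNormalDensity z) ω ≤
      2 / Real.sqrt (2 * Real.pi) * Real.exp (-z₀ ^ 2 / 2) := by
  set c := z₀ ^ 2 - 2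
  have hc : c = 2 * exp (-z₀ ^ 2 / 2) := sub_two_eq_two_mul_exp_neg_half hz₀_eq
  have hmax : max c (2 * exp (-(c + 2) / 2)) = c := by
    rw [show c + 2 = z₀ ^ 2 by ring, ← hc, max_self]
  have hc_nonneg : 0 ≤ c := by rw [hc]; positivity
  have hbound (z : ℝ) : |(z ^ 2 - c) * stdNormalDensity z| ≤ c / √(2 * π) :=
    (abs_sq_sub_mul_stdNormalDensity_le hc_nonneg z).trans_eq (by rw [hmax])
  have hneutral_shift : signedIntegral (fun z => z ^ 2 * stdNormalDensity z) ω =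
      signedIntegral (fun z => (z ^ 2 - c) * stdNormalDensity z) ω := by
    simpa only [sub_mul, sub_add_cancel, hneutral, mul_zero, add_zero] using
      signedIntegral_add_const_mul ω (by fun_prop) hbound measurable_stdNormalDensity
        abs_stdNormalDensity_le c
  have hTV_real : (ω.totalVariation univ).toReal ≤ 1 :=
    ENNReal.toReal_le_of_le_ofReal zero_le_one (by simpa using hTV)
  calc signedIntegral (fun z => z ^ 2 * stdNormalDensity z) ω
      = signedIntegral (fun z => (z ^ 2 - c) * stdNormalDensity z) ω := hneutral_shift
    _ ≤ c / √(2 * π) * (ω.totalVariation univ).toReal :=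
        signedIntegral_le_mul_totalVariation ω hbound
    _ ≤ c / √(2 * π) := mul_le_of_le_one_right (by positivity) hTV_real
    _ = 2 / √(2 * π) * exp (-z₀ ^ 2 / 2) := by rw [hc]; ring

/-- For every vega-neutral signed measure of total variation at
most one, `∫ z² n(z) ω(dz) ≤ (2/√(2π)) e^{-z₀²/2}`, where `z₀` is the unique
positive solution of `(z₀²/2)e^{z₀²/2} = e^{z₀²/2} + 1`. -/
theorem convexity_term_bound
    (z₀ : ℝ) (hz₀_pos : 0 < z₀)
    (hz₀_eq : (z₀ ^ 2 / 2) * Real.exp (z₀ ^ 2 / 2) = Real.exp (z₀ ^ 2 / 2) + 1)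
    (ω : SignedMeasure ℝ)
    (hTV : ω.totalVariation univ ≤ 1)
    (hneutral : signedIntegral stdNormalDensity ω = 0) :
    signedIntegral (fun z => z ^ 2 * stdNormalDensity z) ω ≤
      2 / Real.sqrt (2 * Real.pi) * Real.exp (-z₀ ^ 2 / 2) :=
  convexity_term_bound_general z₀ hz₀_eq ω hTV hneutral
end

section
/- Let n(z) = (2π)^{-1/2} e^{-z²/2} be the standard normal density and let z₀ be the unique positive solution of (z₀²/2)e^{z₀²/2} = e^{z₀²/2} + 1. Fix A ≥ 0 and B ∈ ℝ with A + |B| > 0, and define P^opt = sup { A∫z²n(z)ω(dz) + B∫zn(z)ω(dz) : ω finite signed measure on ℝ, ‖ω‖_TV ≤ 1, ∫n(z)ω(dz) = 0 }, P^BF = 2A e^{-z₀²/2}/√(2π), P^RR = |B| e^{-1/2}/√(2π), and α = P^RR/(P^RR + P^BF). Then P^RR ≥ α·P^opt and P^BF ≥ (1−α)·P^opt. -/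
open MeasureTheory Set

/-!
Vega neutrality, `∫ n dω = 0`, lets one replace the butterfly weight `z²` by `z² - c` for any
constant `c`, so the profit of `ω` is `∫ (A (z² - c) + B z) n(z) ω(dz)`, at most
`‖ω‖_TV · (A sup |z² - c| n(z) + |B| sup |z| n(z))`. The second supremum is `e^{-1/2}/√(2π)`; the
first is the larger of the value `c/√(2π)` at `z = 0` and the value `2e^{-(c+2)/2}/√(2π)` at
`z² = c + 2`. For `c = 2e^{-z₀²/2}` the equation defining `z₀` says exactly `z₀² = c + 2`, so the
two coincide, and `P^opt ≤ P^RR + P^BF`, from which both inequalities follow.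
-/

open Real

lemma le_exp_sub_one (x : ℝ) : x ≤ exp (x - 1) := by
  linarith [add_one_le_exp (x - 1)]

lemma abs_mul_exp_neg_sq_div_two_le (z : ℝ) : |z| * exp (-z ^ 2 / 2) ≤ exp (-1 / 2) := by
  have hz : |z| ≤ exp ((z ^ 2 - 1) / 2) :=
    calc |z| ≤ (z ^ 2 + 1) / 2 := by nlinarith [sq_abs z, sq_nonneg (|z| - 1)]
      _ ≤ exp ((z ^ 2 + 1) / 2 - 1) := le_exp_sub_one _
      _ = exp ((z ^ 2 - 1) / 2) := by ring_nf
  calc |z| * exp (-z ^ 2 / 2) ≤ exp ((z ^ 2 - 1) / 2) * exp (-z ^ 2 / 2) := by gcongr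
    _ = exp (-1 / 2) := by rw [← exp_add]; ring_nf

lemma abs_sq_sub_mul_exp_neg_sq_div_two_le {c : ℝ} (hc : 0 ≤ c) (z : ℝ) :
    |z ^ 2 - c| * exp (-z ^ 2 / 2) ≤ max c (2 * exp (-(c + 2) / 2)) := by
  have hexp_le_one : exp (-z ^ 2 / 2) ≤ 1 := exp_le_one_iff.mpr (by nlinarith [sq_nonneg z])
  rcases le_or_gt (z ^ 2) c with h | h
  · rw [abs_of_nonpos (by linarith)]
    refine le_max_of_le_left ?_
    nlinarith [exp_pos (-z ^ 2 / 2), sq_nonneg z]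
  · rw [abs_of_pos (by linarith)]
    refine le_max_of_le_right ?_
    calc (z ^ 2 - c) * exp (-z ^ 2 / 2)
        ≤ 2 * exp ((z ^ 2 - c) / 2 - 1) * exp (-z ^ 2 / 2) := by
          gcongr; linarith [le_exp_sub_one ((z ^ 2 - c) / 2)]
      _ = 2 * exp (-(c + 2) / 2) := by rw [mul_assoc, ← exp_add]; ring_nf

lemma sq_eq_two_add_two_mul_exp {z₀ : ℝ}
    (h : (z₀ ^ 2 / 2) * exp (z₀ ^ 2 / 2) = exp (z₀ ^ 2 / 2) + 1) :
    z₀ ^ 2 = 2 + 2 * exp (-z₀ ^ 2 / 2) := by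
  have hinv : exp (-z₀ ^ 2 / 2) * exp (z₀ ^ 2 / 2) = 1 := by rw [← exp_add]; ring_nf; simp
  nlinarith [exp_pos (z₀ ^ 2 / 2)]

lemma Continuous.integrable_of_abs_le {X : Type*} [TopologicalSpace X] [MeasurableSpace X]
    [OpensMeasurableSpace X] {μ : Measure X} [IsFiniteMeasure μ] {f : X → ℝ}
    (hf : Continuous f) {C : ℝ} (hC : ∀ x, |f x| ≤ C) : Integrable f μ :=
  .of_bound hf.aestronglyMeasurable C (.of_forall hC)

section SignedIntegral

variable {f g : ℝ → ℝ} {ω : SignedMeasure ℝ}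

lemma signedIntegral_const_mul (a : ℝ) :
    signedIntegral (fun z => a * f z) ω = a * signedIntegral f ω := by
  simp only [signedIntegral, integral_const_mul]; ring

lemma signedIntegral_add (hf : ∀ (μ : Measure ℝ) [IsFiniteMeasure μ], Integrable f μ)
    (hg : ∀ (μ : Measure ℝ) [IsFiniteMeasure μ], Integrable g μ) :
    signedIntegral (fun z => f z + g z) ω = signedIntegral f ω + signedIntegral g ω := by
  simp only [signedIntegral, integral_add (hf _) (hg _)]; ring

lemma abs_signedIntegral_le {C : ℝ} (hf : ∀ z, |f z| ≤ C) :
    |signedIntegral f ω| ≤ C * (ω.totalVariation univ).toReal := by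
  set μp := ω.toJordanDecomposition.posPart
  set μn := ω.toJordanDecomposition.negPart
  have hp : |∫ z, f z ∂μp| ≤ C * μp.real univ :=
    norm_integral_le_of_norm_le_const (.of_forall hf : ∀ᵐ z ∂μp, ‖f z‖ ≤ C)
  have hn : |∫ z, f z ∂μn| ≤ C * μn.real univ :=
    norm_integral_le_of_norm_le_const (.of_forall hf : ∀ᵐ z ∂μn, ‖f z‖ ≤ C)
  have htv : (ω.totalVariation univ).toReal = μp.real univ + μn.real univ :=
    ENNReal.toReal_add (measure_ne_top μp univ) (measure_ne_top μn univ)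
  calc |signedIntegral f ω| ≤ |∫ z, f z ∂μp| + |∫ z, f z ∂μn| := abs_sub _ _
    _ ≤ C * (ω.totalVariation univ).toReal := by rw [htv]; linarith

end SignedIntegral

lemma stdNormalDensity_nonneg (z : ℝ) : 0 ≤ stdNormalDensity z := by
  unfold stdNormalDensity; positivity

lemma continuous_stdNormalDensity : Continuous stdNormalDensity := by
  unfold stdNormalDensity; fun_prop

lemma abs_mul_stdNormalDensity_le_s15 {p : ℝ → ℝ} {C : ℝ} (hp : ∀ z, |p z| * exp (-z ^ 2 / 2) ≤ C)
    (z : ℝ) : |p z * stdNormalDensity z| ≤ C / √(2 * π) := by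
  have hdens : stdNormalDensity z = exp (-z ^ 2 / 2) / √(2 * π) := inv_mul_eq_div _ _
  rw [abs_mul, abs_of_nonneg (stdNormalDensity_nonneg z), hdens, ← mul_div_assoc]
  exact div_le_div_of_nonneg_right (hp z) (sqrt_nonneg _)

lemma integrable_mul_stdNormalDensity {p : ℝ → ℝ} (hp : Continuous p) {C : ℝ}
    (hpC : ∀ z, |p z| * exp (-z ^ 2 / 2) ≤ C) (μ : Measure ℝ) [IsFiniteMeasure μ] :
    Integrable (fun z => p z * stdNormalDensity z) μ :=
  (hp.mul continuous_stdNormalDensity).integrable_of_abs_le (abs_mul_stdNormalDensity_le_s15 hpC)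

lemma integrable_sq_mul_stdNormalDensity (μ : Measure ℝ) [IsFiniteMeasure μ] :
    Integrable (fun z => z ^ 2 * stdNormalDensity z) μ :=
  integrable_mul_stdNormalDensity (continuous_pow 2) (C := max 0 (2 * exp (-(0 + 2) / 2)))
    (fun z => by simpa only [sub_zero] using abs_sq_sub_mul_exp_neg_sq_div_two_le le_rfl z) μ

lemma integrable_id_mul_stdNormalDensity (μ : Measure ℝ) [IsFiniteMeasure μ] :
    Integrable (fun z => z * stdNormalDensity z) μ :=
  integrable_mul_stdNormalDensity continuous_id abs_mul_exp_neg_sq_div_two_le μ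

lemma integrable_stdNormalDensity (μ : Measure ℝ) [IsFiniteMeasure μ] :
    Integrable stdNormalDensity μ := by
  simpa only [one_mul] using integrable_mul_stdNormalDensity (p := fun _ => 1) (C := 1)
    continuous_const (fun z => by
      simpa only [abs_one, one_mul, exp_le_one_iff] using by nlinarith [sq_nonneg z]) μ

lemma signedIntegral_eq_of_signedIntegral_stdNormalDensity_eq_zero {ω : SignedMeasure ℝ}
    (hvega : signedIntegral stdNormalDensity ω = 0) (A B c : ℝ) :
    A * signedIntegral (fun z => z ^ 2 * stdNormalDensity z) ω
        + B * signedIntegral (fun z => z * stdNormalDensity z) ω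
      = signedIntegral (fun z => (A * (z ^ 2 - c) + B * z) * stdNormalDensity z) ω := by
  have hsplit : (fun z => (A * (z ^ 2 - c) + B * z) * stdNormalDensity z) = fun z =>
      (A * (z ^ 2 * stdNormalDensity z) + B * (z * stdNormalDensity z))
        + -(A * c) * stdNormalDensity z := by
    funext z; ring
  have hsq μ [IsFiniteMeasure μ] := (integrable_sq_mul_stdNormalDensity μ).const_mul A
  have hid μ [IsFiniteMeasure μ] := (integrable_id_mul_stdNormalDensity μ).const_mul B
  rw [hsplit, signedIntegral_add
      (f := fun z => A * (z ^ 2 * stdNormalDensity z) + B * (z * stdNormalDensity z))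
      (fun μ _ => (hsq μ).add (hid μ))
      (fun μ _ => (integrable_stdNormalDensity μ).const_mul _),
    signedIntegral_add hsq hid, signedIntegral_const_mul, signedIntegral_const_mul,
    signedIntegral_const_mul, hvega]
  ring

lemma abs_butterfly_add_riskReversal_mul_exp_le {A c : ℝ} (hA : 0 ≤ A) (hc : 0 ≤ c) (B z : ℝ) :
    |A * (z ^ 2 - c) + B * z| * exp (-z ^ 2 / 2)
      ≤ A * max c (2 * exp (-(c + 2) / 2)) + |B| * exp (-1 / 2) :=
  calc |A * (z ^ 2 - c) + B * z| * exp (-z ^ 2 / 2)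
      ≤ A * (|z ^ 2 - c| * exp (-z ^ 2 / 2)) + |B| * (|z| * exp (-z ^ 2 / 2)) := by
        have := abs_add_le (A * (z ^ 2 - c)) (B * z)
        rw [abs_mul, abs_mul, abs_of_nonneg hA] at this
        nlinarith [exp_pos (-z ^ 2 / 2)]
    _ ≤ A * max c (2 * exp (-(c + 2) / 2)) + |B| * exp (-1 / 2) := add_le_add
        (mul_le_mul_of_nonneg_left (abs_sq_sub_mul_exp_neg_sq_div_two_le hc z) hA)
        (mul_le_mul_of_nonneg_left (abs_mul_exp_neg_sq_div_two_le z) (abs_nonneg B))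

lemma profit_le_of_totalVariation_le_one {A B c : ℝ} (hA : 0 ≤ A) (hc : 0 ≤ c)
    {ω : SignedMeasure ℝ} (hTV : ω.totalVariation univ ≤ 1)
    (hvega : signedIntegral stdNormalDensity ω = 0) :
    A * signedIntegral (fun z => z ^ 2 * stdNormalDensity z) ω
        + B * signedIntegral (fun z => z * stdNormalDensity z) ω
      ≤ (A * max c (2 * exp (-(c + 2) / 2)) + |B| * exp (-1 / 2)) / √(2 * π) := by
  have hbound := abs_mul_stdNormalDensity_le_s15 (abs_butterfly_add_riskReversal_mul_exp_le hA hc B)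
  have hTV' : (ω.totalVariation univ).toReal ≤ 1 := by
    simpa using ENNReal.toReal_mono ENNReal.one_ne_top hTV
  have hK := (abs_nonneg _).trans (hbound 0)
  rw [signedIntegral_eq_of_signedIntegral_stdNormalDensity_eq_zero hvega A B c]
  calc _ ≤ _ * (ω.totalVariation univ).toReal :=
        (le_abs_self _).trans (abs_signedIntegral_le hbound)
    _ ≤ _ := mul_le_of_le_one_right hK hTV'

lemma div_add_mul_le_and_one_sub_div_add_mul_le {p q x : ℝ} (hp : 0 ≤ p) (hq : 0 ≤ q)
    (hx : x ≤ p + q) : p / (p + q) * x ≤ p ∧ (1 - p / (p + q)) * x ≤ q := by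
  rcases (add_nonneg hp hq).eq_or_lt with hpq | hpq
  · have hp0 : p = 0 := by linarith
    have hq0 : q = 0 := by linarith
    subst hp0 hq0
    simpa using hx
  · have hα : p / (p + q) * (p + q) = p := div_mul_cancel₀ p hpq.ne'
    have hα0 : 0 ≤ p / (p + q) := by positivity
    have hα1 : p / (p + q) ≤ 1 := div_le_one_of_le₀ (by linarith) hpq.le
    constructor <;> nlinarith

theorem butterfly_risk_reversal_performance_guarantee_general
    (z₀ : ℝ)
    (hz₀_eq : (z₀ ^ 2 / 2) * Real.exp (z₀ ^ 2 / 2) = Real.exp (z₀ ^ 2 / 2) + 1)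
    (A B : ℝ) (hA : 0 ≤ A)
    (Popt PBF PRR α : ℝ)
    (hPopt : Popt = sSup {r : ℝ | ∃ ω : SignedMeasure ℝ,
      ω.totalVariation univ ≤ 1 ∧
      signedIntegral stdNormalDensity ω = 0 ∧
      r = A * signedIntegral (fun z => z ^ 2 * stdNormalDensity z) ω
          + B * signedIntegral (fun z => z * stdNormalDensity z) ω})
    (hPBF : PBF = 2 * A * Real.exp (-z₀ ^ 2 / 2) / Real.sqrt (2 * Real.pi))
    (hPRR : PRR = |B| * Real.exp (-(1:ℝ)/2) / Real.sqrt (2 * Real.pi))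
    (hα : α = PRR / (PRR + PBF)) :
    α * Popt ≤ PRR ∧ (1 - α) * Popt ≤ PBF := by
  set c := 2 * exp (-z₀ ^ 2 / 2)
  have hz₀_sq : z₀ ^ 2 = c + 2 := by linarith [sq_eq_two_add_two_mul_exp hz₀_eq]
  have hmax : max c (2 * exp (-(c + 2) / 2)) = c := by rw [← hz₀_sq, max_self]
  have hPBF0 : 0 ≤ PBF := by rw [hPBF]; positivity
  have hPRR0 : 0 ≤ PRR := by rw [hPRR]; positivity
  have hPopt_le : Popt ≤ PRR + PBF := by
    rw [hPopt]
    refine Real.sSup_le ?_ (add_nonneg hPRR0 hPBF0)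
    rintro r ⟨ω, hTV, hvega, rfl⟩
    have hprofit := profit_le_of_totalVariation_le_one (B := B) hA (by positivity : 0 ≤ c) hTV hvega
    rw [hmax] at hprofit
    rw [hPRR, hPBF]
    linarith [show (A * c + |B| * exp (-1 / 2)) / √(2 * π)
      = |B| * exp (-1 / 2) / √(2 * π) + 2 * A * exp (-z₀ ^ 2 / 2) / √(2 * π) by ring]
  exact hα ▸ div_add_mul_le_and_one_sub_div_add_mul_le hPRR0 hPBF0 hPopt_le

/-- Performance guarantee of the universal butterfly and risk
reversal: with `P^opt` the optimal profit over vega-neutral portfolios of total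
variation at most one, `P^BF = 2A e^{-z₀²/2}/√(2π)`, `P^RR = |B| e^{-1/2}/√(2π)`
and `α = P^RR/(P^RR + P^BF)`, one has `P^RR ≥ α P^opt` and
`P^BF ≥ (1−α) P^opt`. -/
theorem butterfly_risk_reversal_performance_guarantee
    (z₀ : ℝ) (hz₀_pos : 0 < z₀)
    (hz₀_eq : (z₀ ^ 2 / 2) * Real.exp (z₀ ^ 2 / 2) = Real.exp (z₀ ^ 2 / 2) + 1)
    (A B : ℝ) (hA : 0 ≤ A) (hAB : 0 < A + |B|)
    (Popt PBF PRR α : ℝ)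
    (hPopt : Popt = sSup {r : ℝ | ∃ ω : SignedMeasure ℝ,
      ω.totalVariation univ ≤ 1 ∧
      signedIntegral stdNormalDensity ω = 0 ∧
      r = A * signedIntegral (fun z => z ^ 2 * stdNormalDensity z) ω
          + B * signedIntegral (fun z => z * stdNormalDensity z) ω})
    (hPBF : PBF = 2 * A * Real.exp (-z₀ ^ 2 / 2) / Real.sqrt (2 * Real.pi))
    (hPRR : PRR = |B| * Real.exp (-(1:ℝ)/2) / Real.sqrt (2 * Real.pi))
    (hα : α = PRR / (PRR + PBF)) :
    α * Popt ≤ PRR ∧ (1 - α) * Popt ≤ PBF :=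
  butterfly_risk_reversal_performance_guarantee_general z₀ hz₀_eq A B hA Popt PBF PRR α hPopt hPBF
    hPRR hα
end
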